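/- arXiv:1909.04505 — 2 statements merged into one kernel-verified Lean document; each statement's English description precedes it below -/
import Mathlib

section
/- Let v₁, v₂, v₃ be linearly independent unit vectors in ℝ³ and let C be the closed convex cone of their nonnegative linear combinations. For a unit vector u, the orthogonal projection of C onto the plane u^⊥ equals all of u^⊥ if and only if u lies in the interior of C or −u lies in the interior of C. -/
/-! In the coordinates of the basis `v₁, v₂, v₃` the cone `C` is the closed positive orthant and
its interior the open one. The projection onto `u^⊥` covers the plane iff every line `x + ℝ u`
meets `C`, and a line `t + s a` meets the orthant for every `t` iff all coordinates of `a` have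
the same strict sign; otherwise the line through `(-1, …, -1)` misses it. -/

open Set

section Octant

variable {𝕜 ι : Type*} [Field 𝕜] [LinearOrder 𝕜] [IsStrictOrderedRing 𝕜]

lemma exists_forall_nonneg_add_mul_of_pos [Finite ι] {a : ι → 𝕜} (ha : ∀ i, 0 < a i)
    (t : ι → 𝕜) : ∃ s : 𝕜, ∀ i, 0 ≤ t i + s * a i := by
  obtain ⟨s, hs⟩ := Finite.exists_le fun i ↦ -t i / a i
  refine ⟨s, fun i ↦ ?_⟩
  have := (div_le_iff₀ (ha i)).mp (hs i)
  linarith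

lemma forall_exists_forall_nonneg_add_mul_iff [Finite ι] (a : ι → 𝕜) :
    (∀ t : ι → 𝕜, ∃ s : 𝕜, ∀ i, 0 ≤ t i + s * a i) ↔ (∀ i, 0 < a i) ∨ (∀ i, a i < 0) := by
  refine ⟨fun h ↦ ?_, ?_⟩
  · by_contra! ⟨⟨i, hi⟩, ⟨j, hj⟩⟩
    obtain ⟨s, hs⟩ := h fun _ ↦ -1
    rcases le_total s 0 with hs0 | hs0
    · nlinarith [hs j]
    · nlinarith [hs i]
  · rintro (hpos | hneg) t
    · exact exists_forall_nonneg_add_mul_of_pos hpos t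
    · obtain ⟨s, hs⟩ := exists_forall_nonneg_add_mul_of_pos (a := -a) (by simpa using hneg) t
      exact ⟨-s, fun i ↦ by simpa using hs i⟩

end Octant

namespace Module.Basis

variable {𝕜 ι E : Type*}

lemma exists_nonneg_sum_smul_eq_iff [Semiring 𝕜] [Preorder 𝕜] [AddCommMonoid E] [Module 𝕜 E]
    [Fintype ι] (b : Basis ι 𝕜 E) (x : E) :
    (∃ t : ι → 𝕜, (∀ i, 0 ≤ t i) ∧ x = ∑ i, t i • b i) ↔ ∀ i, 0 ≤ b.repr x i := by
  refine ⟨?_, fun h ↦ ⟨_, h, (b.sum_repr x).symm⟩⟩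
  rintro ⟨t, ht, rfl⟩
  simpa only [b.repr_sum_self] using ht

lemma forall_exists_repr_add_smul_nonneg_iff [Field 𝕜] [LinearOrder 𝕜] [IsStrictOrderedRing 𝕜]
    [AddCommGroup E] [Module 𝕜 E] [Fintype ι] (b : Basis ι 𝕜 E) (u : E) :
    (∀ x, ∃ s : 𝕜, ∀ i, 0 ≤ b.repr (x + s • u) i) ↔
      (∀ i, 0 < b.repr u i) ∨ (∀ i, b.repr u i < 0) := by
  rw [← forall_exists_forall_nonneg_add_mul_iff]
  refine b.equivFun.symm.surjective.forall.trans (forall_congr' fun t ↦ ?_)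
  simp only [map_add, map_smul, Finsupp.coe_add, Finsupp.coe_smul, Pi.add_apply, Pi.smul_apply,
    smul_eq_mul, Basis.equivFun_symm_apply, Basis.repr_sum_self]

lemma interior_setOf_repr_nonneg [NormedAddCommGroup E] [NormedSpace ℝ E]
    [FiniteDimensional ℝ E] [Fintype ι] (b : Basis ι ℝ E) :
    interior {x | ∀ i, 0 ≤ b.repr x i} = {x | ∀ i, 0 < b.repr x i} := by
  have h : {x | ∀ i, 0 ≤ b.repr x i} = b.equivFunL ⁻¹' univ.pi fun _ ↦ Ici 0 := by
    ext; simp [Pi.le_def]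
  rw [h, ← b.equivFunL.isOpenMap.preimage_interior_eq_interior_preimage b.equivFunL.continuous,
    interior_pi_set finite_univ]
  ext; simp

end Module.Basis

lemma image_orthogonalProjectionOnto_eq_univ_iff {𝕜 E : Type*} [RCLike 𝕜]
    [NormedAddCommGroup E] [InnerProductSpace 𝕜 E] (K : Submodule 𝕜 E)
    [K.HasOrthogonalProjection] (C : Set E) :
    K.orthogonalProjectionOnto '' C = univ ↔ ∀ x, ∃ y ∈ Kᗮ, x + y ∈ C := by
  refine ⟨fun h x ↦ ?_, fun h ↦ eq_univ_of_forall fun z ↦ ?_⟩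
  · obtain ⟨c, hc, hcx⟩ := h.symm ▸ mem_univ (K.orthogonalProjectionOnto x)
    refine ⟨c - x, ?_, by simpa using hc⟩
    rw [← Submodule.orthogonalProjectionOnto_eq_zero_iff, map_sub, hcx, sub_self]
  · obtain ⟨y, hy, hzy⟩ := h z
    refine ⟨_, hzy, ?_⟩
    rw [map_add, Submodule.orthogonalProjectionOnto_eq_zero_iff.mpr hy, add_zero,
      Submodule.orthogonalProjectionOnto_mem_subspace_eq_self]

lemma image_orthogonalProjectionOnto_orthogonal_span_singleton_eq_univ_iff {𝕜 E : Type*}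
    [RCLike 𝕜] [NormedAddCommGroup E] [InnerProductSpace 𝕜 E] (u : E) (C : Set E) :
    (𝕜 ∙ u)ᗮ.orthogonalProjectionOnto '' C = univ ↔ ∀ x, ∃ s : 𝕜, x + s • u ∈ C := by
  simp [image_orthogonalProjectionOnto_eq_univ_iff, Submodule.orthogonal_orthogonal,
    Submodule.mem_span_singleton]

theorem cone_projection_covers_plane_iff_general
    (v₁ v₂ v₃ : EuclideanSpace ℝ (Fin 3))
    (hli : LinearIndependent ℝ ![v₁, v₂, v₃])
    (C : Set (EuclideanSpace ℝ (Fin 3)))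
    (hC : C = {x | ∃ t₁ t₂ t₃ : ℝ, 0 ≤ t₁ ∧ 0 ≤ t₂ ∧ 0 ≤ t₃ ∧
        x = t₁ • v₁ + t₂ • v₂ + t₃ • v₃})
    (u : EuclideanSpace ℝ (Fin 3)) :
    (Submodule.orthogonalProjectionOnto (ℝ ∙ u)ᗮ '' C = Set.univ)
      ↔ (u ∈ interior C ∨ -u ∈ interior C) := by
  obtain ⟨b, hb⟩ : ∃ b : Module.Basis (Fin 3) ℝ (EuclideanSpace ℝ (Fin 3)), ⇑b = ![v₁, v₂, v₃] :=
    ⟨_, coe_basisOfLinearIndependentOfCardEqFinrank hli (by simp)⟩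
  have hCb : C = {x | ∀ i, 0 ≤ b.repr x i} := by
    ext x
    simp only [hC, mem_ofPred_eq]
    rw [← b.exists_nonneg_sum_smul_eq_iff]
    simp [Fin.exists_fin_succ_pi, Fin.sum_univ_three, hb, Fin.forall_fin_succ, and_assoc]
  rw [image_orthogonalProjectionOnto_orthogonal_span_singleton_eq_univ_iff, hCb,
    b.interior_setOf_repr_nonneg]
  simpa using b.forall_exists_repr_add_smul_nonneg_iff u

/-- Projection of the cone `C` generated by three linearly independent unit vectors onto
the plane `u^⊥` covers the whole plane iff `u` or `-u` lies in the interior of `C`. -/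
theorem cone_projection_covers_plane_iff
    (v₁ v₂ v₃ : EuclideanSpace ℝ (Fin 3))
    (hv₁ : ‖v₁‖ = 1) (hv₂ : ‖v₂‖ = 1) (hv₃ : ‖v₃‖ = 1)
    (hli : LinearIndependent ℝ ![v₁, v₂, v₃])
    (C : Set (EuclideanSpace ℝ (Fin 3)))
    (hC : C = {x | ∃ t₁ t₂ t₃ : ℝ, 0 ≤ t₁ ∧ 0 ≤ t₂ ∧ 0 ≤ t₃ ∧
        x = t₁ • v₁ + t₂ • v₂ + t₃ • v₃})
    (u : EuclideanSpace ℝ (Fin 3)) (hu : ‖u‖ = 1) :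
    (Submodule.orthogonalProjectionOnto (ℝ ∙ u)ᗮ '' C = Set.univ)
      ↔ (u ∈ interior C ∨ -u ∈ interior C) :=
  cone_projection_covers_plane_iff_general v₁ v₂ v₃ hli C hC u
end

section
/- Let v₁, v₂, v₃ be linearly independent unit vectors in ℝ³ and let C be the closed convex cone of their nonnegative linear combinations. The set of unit vectors u for which the orthogonal projection of C onto u^⊥ equals all of u^⊥ has spherical surface measure 2·σ(C ∩ S²), where σ(C ∩ S²) is the solid angle measure of C at the origin. Equivalently, for a uniformly random unit direction u, the projection covers the whole plane with probability σ(C ∩ S²)/(2π). -/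
/-!
The projection of `C` onto `u^⊥` is onto iff `C + ℝ u` is the whole space. In coordinates with
respect to the basis `v₁, v₂, v₃` this happens exactly when all coordinates of `u` are nonzero and
of the same sign. So the good directions on the sphere are the interior of the spherical triangle
`C ∩ S²` together with its antipodal copy: two disjoint congruent sets. The boundary of the
triangle lies on three great circles, which are smooth curves and hence carry no area.
-/

open MeasureTheory Module Set Metric
open scoped NNReal

theorem exists_forall_mul_le_iff {ι : Type*} [Finite ι] (u : ι → ℝ) :
    (∀ x : ι → ℝ, ∃ s : ℝ, ∀ i, s * u i ≤ x i) ↔ (∀ i, 0 < u i) ∨ ∀ i, u i < 0 := by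
  constructor
  · intro h
    by_contra! hu
    obtain ⟨⟨i, hi⟩, ⟨j, hj⟩⟩ := hu
    obtain ⟨s, hs⟩ := h fun _ => -1
    rcases le_total 0 s with hs0 | hs0
    · nlinarith [hs j, mul_nonneg hs0 hj]
    · nlinarith [hs i, mul_nonneg_of_nonpos_of_nonpos hs0 hi]
  · rintro (hu | hu) x
    · obtain ⟨s, hs⟩ := (finite_range fun i => x i / u i).bddBelow
      exact ⟨s, fun i => (le_div_iff₀ (hu i)).mp (hs ⟨i, rfl⟩)⟩
    · obtain ⟨s, hs⟩ := (finite_range fun i => x i / u i).bddAbove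
      exact ⟨s, fun i => (div_le_iff_of_neg (hu i)).mp (hs ⟨i, rfl⟩)⟩

theorem Submodule.orthogonalProjectionOnto_image_eq_univ_iff {𝕜 E : Type*} [RCLike 𝕜]
    [NormedAddCommGroup E] [InnerProductSpace 𝕜 E] (K : Submodule 𝕜 E)
    [K.HasOrthogonalProjection] (C : Set E) :
    K.orthogonalProjectionOnto '' C = univ ↔ ∀ x, ∃ c ∈ C, x - c ∈ Kᗮ := by
  simp_rw [← K.orthogonalProjectionOnto_eq_zero_iff, map_sub, sub_eq_zero]
  constructor
  · intro h x
    obtain ⟨c, hc, hcx⟩ := h.symm ▸ mem_univ (K.orthogonalProjectionOnto x)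
    exact ⟨c, hc, hcx.symm⟩
  · refine fun h => eq_univ_of_forall fun y => ?_
    obtain ⟨c, hc, hcy⟩ := h y
    exact ⟨c, hc, by rw [← hcy, K.orthogonalProjectionOnto_mem_subspace_eq_self]⟩

theorem Submodule.hausdorffMeasure_inter_sphere_eq_zero {E : Type*} [NormedAddCommGroup E]
    [InnerProductSpace ℝ E] [MeasurableSpace E] [BorelSpace E] {K : Submodule ℝ E}
    (hK : finrank ℝ K = 2) {d : ℝ} (hd : 1 < d) (r : ℝ) :
    μH[d] ((K : Set E) ∩ sphere 0 r) = 0 := by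
  lift d to ℝ≥0 using zero_le_one.trans hd.le
  have : FiniteDimensional ℝ K := .of_finrank_eq_succ hK
  let e := Complex.isometryOfOrthonormal ((stdOrthonormalBasis ℝ K).reindex (finCongr hK))
  let f : ℝ → E := fun θ => e (r * Complex.exp (θ * Complex.I))
  have hf : ContDiff ℝ 1 f :=
    (K.subtypeₗᵢ.comp e.toLinearIsometry).toContinuousLinearMap.contDiff.comp
      (contDiff_const.mul (Complex.contDiff_exp.comp
        (Complex.ofRealCLM.contDiff.mul contDiff_const)))
  have hsub : (K : Set E) ∩ sphere 0 r ⊆ range f := by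
    rintro x ⟨hxK, hx⟩
    refine ⟨Complex.arg (e.symm ⟨x, hxK⟩), ?_⟩
    have : ‖e.symm ⟨x, hxK⟩‖ = r := by simpa using hx
    simp only [f, ← this, Complex.norm_mul_exp_arg_mul_I, LinearIsometryEquiv.apply_symm_apply]
  refine measure_mono_null hsub (hausdorffMeasure_of_dimH_lt ?_)
  calc dimH (range f) ≤ finrank ℝ ℝ := hf.dimH_range_le
    _ < d := by rw [finrank_self]; exact_mod_cast hd

theorem hausdorffMeasure_union_neg {E : Type*} [NormedAddCommGroup E] [MeasurableSpace E]
    [BorelSpace E] {d : ℝ} {s : Set E} (hs : MeasurableSet s) (h : Disjoint s (-s)) :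
    μH[d] (s ∪ -s) = 2 * μH[d] s := by
  have hneg : μH[d] (-s) = μH[d] s := (IsometryEquiv.neg E).hausdorffMeasure_preimage d s
  rw [measure_union' h hs, hneg, two_mul]

namespace Module.Basis

variable {ι E : Type*} [Fintype ι]

theorem setOf_exists_nonneg_sum_smul_eq [AddCommGroup E] [Module ℝ E] (b : Basis ι ℝ E) :
    {x | ∃ t : ι → ℝ, (∀ i, 0 ≤ t i) ∧ x = ∑ i, t i • b i} = {x | ∀ i, 0 ≤ b.repr x i} := by
  ext x
  constructor
  · rintro ⟨t, ht, rfl⟩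
    rwa [mem_ofPred_eq, b.repr_sum_self]
  · exact fun hx => ⟨_, hx, (b.sum_repr x).symm⟩

theorem orthogonalProjectionOnto_image_cone_eq_univ_iff [NormedAddCommGroup E]
    [InnerProductSpace ℝ E] (b : Basis ι ℝ E) (u : E) :
    (ℝ ∙ u)ᗮ.orthogonalProjectionOnto '' {x | ∀ i, 0 ≤ b.repr x i} = univ ↔
      (∀ i, 0 < b.repr u i) ∨ ∀ i, b.repr u i < 0 := by
  rw [Submodule.orthogonalProjectionOnto_image_eq_univ_iff, Submodule.orthogonal_orthogonal,
    ← exists_forall_mul_le_iff, b.equivFun.surjective.forall]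
  refine forall_congr' fun x => ⟨?_, ?_⟩
  · rintro ⟨c, hc, hxc⟩
    obtain ⟨s, hs⟩ := Submodule.mem_span_singleton.mp hxc
    obtain rfl : c = x - s • u := by rw [hs, sub_sub_cancel]
    refine ⟨s, fun i => ?_⟩
    simpa using hc i
  · rintro ⟨s, hs⟩
    refine ⟨x - s • u, fun i => ?_, Submodule.mem_span_singleton.mpr ⟨s, ?_⟩⟩
    · simpa using hs i
    · rw [sub_sub_cancel]

theorem hausdorffMeasure_cone_inter_sphere [NormedAddCommGroup E] [InnerProductSpace ℝ E]
    [MeasurableSpace E] [BorelSpace E] (hE : finrank ℝ E = 3) (b : Basis ι ℝ E) {d : ℝ}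
    (hd : 1 < d) (r : ℝ) :
    μH[d] ({x | ∀ i, 0 ≤ b.repr x i} ∩ sphere 0 r) =
      μH[d] ({x | ∀ i, 0 < b.repr x i} ∩ sphere 0 r) := by
  have hface : ∀ i, μH[d] ((LinearMap.ker (b.coord i) : Set E) ∩ sphere 0 r) = 0 := by
    intro i
    have : FiniteDimensional ℝ E := .of_finrank_eq_succ hE
    have hcoord : b.coord i ≠ 0 := fun h => by simpa using DFunLike.congr_fun h (b i)
    have := Module.Dual.finrank_ker_add_one_of_ne_zero hcoord
    exact Submodule.hausdorffMeasure_inter_sphere_eq_zero (by omega) hd r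
  have hsub : {x | ∀ i, 0 ≤ b.repr x i} ∩ sphere 0 r ⊆
      ({x | ∀ i, 0 < b.repr x i} ∩ sphere 0 r) ∪
        ⋃ i, (LinearMap.ker (b.coord i) : Set E) ∩ sphere 0 r := by
    rintro x ⟨hx, hxr⟩
    by_cases hpos : ∀ i, 0 < b.repr x i
    · exact Or.inl ⟨hpos, hxr⟩
    · obtain ⟨i, hi⟩ := not_forall.mp hpos
      exact Or.inr (mem_iUnion.mpr ⟨i, le_antisymm (not_lt.mp hi) (hx i), hxr⟩)
  refine le_antisymm ?_ (measure_mono (inter_subset_inter_left _ fun x hx i => (hx i).le))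
  calc _ ≤ _ := measure_mono hsub
    _ ≤ _ := measure_union_le _ _
    _ = _ := by rw [measure_iUnion_null hface, add_zero]

end Module.Basis

theorem measure_directions_projection_covers_plane_general
    (v₁ v₂ v₃ : EuclideanSpace ℝ (Fin 3))
    (hli : LinearIndependent ℝ ![v₁, v₂, v₃])
    (C : Set (EuclideanSpace ℝ (Fin 3)))
    (hC : C = {x | ∃ t₁ t₂ t₃ : ℝ, 0 ≤ t₁ ∧ 0 ≤ t₂ ∧ 0 ≤ t₃ ∧
        x = t₁ • v₁ + t₂ • v₂ + t₃ • v₃}) :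
    μH[2] {u : EuclideanSpace ℝ (Fin 3) |
        u ∈ Metric.sphere (0 : EuclideanSpace ℝ (Fin 3)) 1 ∧
        Submodule.orthogonalProjectionOnto (ℝ ∙ u)ᗮ '' C = Set.univ}
      = 2 * μH[2] (C ∩ Metric.sphere (0 : EuclideanSpace ℝ (Fin 3)) 1) := by
  have hE : finrank ℝ (EuclideanSpace ℝ (Fin 3)) = 3 := finrank_euclideanSpace_fin
  let b := basisOfLinearIndependentOfCardEqFinrank hli (by rw [hE, Fintype.card_fin])
  have hb : ⇑b = ![v₁, v₂, v₃] := coe_basisOfLinearIndependentOfCardEqFinrank _ _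
  have hC' : C = {x | ∀ i, 0 ≤ b.repr x i} := by
    rw [hC, ← b.setOf_exists_nonneg_sum_smul_eq]
    ext x
    simp [Fin.exists_fin_succ_pi, Fin.forall_fin_succ, Fin.sum_univ_three, hb, and_assoc]
  set P := {x | ∀ i, 0 < b.repr x i} ∩ sphere (0 : EuclideanSpace ℝ (Fin 3)) 1
  have hdir : {u : EuclideanSpace ℝ (Fin 3) | u ∈ sphere 0 1 ∧
      Submodule.orthogonalProjectionOnto (ℝ ∙ u)ᗮ '' C = Set.univ} = P ∪ -P := by
    ext u
    simp only [P, hC', b.orthogonalProjectionOnto_image_cone_eq_univ_iff, mem_ofPred_eq,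
      inter_neg, neg_ofPred, map_neg, Finsupp.coe_neg, Pi.neg_apply, Left.neg_pos_iff, neg_sphere,
      neg_zero, mem_union, mem_inter_iff]
    tauto
  have hP : MeasurableSet P := by
    refine MeasurableSet.inter ?_ isClosed_sphere.measurableSet
    simp only [ofPred_forall]
    exact .iInter fun i =>
      measurableSet_lt measurable_const (b.coord i).continuous_of_finiteDimensional.measurable
  have hdisj : Disjoint P (-P) := by
    refine disjoint_left.mpr fun u hu hnu => ?_
    have h := hnu.1 0
    rw [map_neg, Finsupp.neg_apply, neg_pos] at h
    exact (hu.1 0).not_gt h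
  rw [hdir, hausdorffMeasure_union_neg hP hdisj, hC',
    b.hausdorffMeasure_cone_inter_sphere hE one_lt_two]

/-- The set of unit directions `u` for which the projection of the cone `C` onto `u^⊥`
covers the whole plane has spherical surface measure `2 σ(C ∩ S²)`; equivalently the
projection covers the plane with probability `σ(C ∩ S²)/(2π)` for a uniformly random
direction. -/
theorem measure_directions_projection_covers_plane
    (v₁ v₂ v₃ : EuclideanSpace ℝ (Fin 3))
    (hv₁ : ‖v₁‖ = 1) (hv₂ : ‖v₂‖ = 1) (hv₃ : ‖v₃‖ = 1)
    (hli : LinearIndependent ℝ ![v₁, v₂, v₃])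
    (C : Set (EuclideanSpace ℝ (Fin 3)))
    (hC : C = {x | ∃ t₁ t₂ t₃ : ℝ, 0 ≤ t₁ ∧ 0 ≤ t₂ ∧ 0 ≤ t₃ ∧
        x = t₁ • v₁ + t₂ • v₂ + t₃ • v₃}) :
    μH[2] {u : EuclideanSpace ℝ (Fin 3) |
        u ∈ Metric.sphere (0 : EuclideanSpace ℝ (Fin 3)) 1 ∧
        Submodule.orthogonalProjectionOnto (ℝ ∙ u)ᗮ '' C = Set.univ}
      = 2 * μH[2] (C ∩ Metric.sphere (0 : EuclideanSpace ℝ (Fin 3)) 1) :=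
  measure_directions_projection_covers_plane_general v₁ v₂ v₃ hli C hC
end
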